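/- Let d ≥ 2 be an even integer and Θ a d-small symbol with bipartition λ¹.λ² and charge (σ₁,σ₂), with defining intervals whose right region lies in row 1 and whose middle region has cardinality at least d. Let b¹ be an addable or removable box of λ¹ and b² an addable or removable box of λ², and suppose the charged contents of b¹ and b² (with respect to t = (σ₁, σ₂ + d/2)) are congruent modulo d. Then the charged content of b¹ is at least d greater than the charged content of b². -/

import Mathlib

open scoped Classical

/-- A β-set: a set of integers containing all sufficiently small integers
and no sufficiently large ones. -/
def IsBetaSet (X : Set ℤ) : Prop :=
  (∃ c : ℤ, ∀ z : ℤ, z < c → z ∈ X) ∧ (∃ C : ℤ, ∀ z : ℤ, C ≤ z → z ∉ X)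

/-- `topB X = max X`. -/
noncomputable def topB (X : Set ℤ) : ℤ := sSup X

/-- `botB X = max {z | every integer < z lies in X}`. -/
noncomputable def botB (X : Set ℤ) : ℤ := sSup {z : ℤ | ∀ w : ℤ, w < z → w ∈ X}

/-- The charge `s(X)` of a β-set `X`, computed with the cutoff `c = botB X`. -/
noncomputable def chargeB (X : Set ℤ) : ℤ :=
  ((X ∩ Set.Ici (botB X)).ncard : ℤ) + botB X - 1

/-- `elemSeq X j` is the `(j+1)`-st largest element of the β-set `X`. -/
noncomputable def elemSeq (X : Set ℤ) : ℕ → ℤ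
  | 0 => sSup X
  | n + 1 => sSup (X ∩ Set.Iio (elemSeq X n))

/-- The partition `λ(X)` of a β-set `X`, `0`-indexed: `partB X j = λ_{j+1}`,
recovered from `x_j = s(X) + λ_j - j + 1` where `x_j` is the `j`-th largest element. -/
noncomputable def partB (X : Set ℤ) (j : ℕ) : ℕ :=
  (elemSeq X j - chargeB X + j).toNat

/-- The size `|λ(X)|` of the partition of a β-set `X`. -/
noncomputable def sizeB (X : Set ℤ) : ℕ := ∑ᶠ j : ℕ, partB X j

/-- A partition, encoded as a weakly decreasing eventually zero function (0-indexed). -/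
def IsPartition (μ : ℕ → ℕ) : Prop :=
  (∀ j, μ (j + 1) ≤ μ j) ∧ ∃ N, ∀ j, N ≤ j → μ j = 0

/-- The β-set `{s + λ_j - j + 1 : j ≥ 1}` of the partition `μ` with charge `s`. -/
def betaOf (μ : ℕ → ℕ) (s : ℤ) : Set ℤ :=
  {x : ℤ | ∃ j : ℕ, x = s + (μ j : ℤ) - (j : ℤ)}

/-- The symbol `Θ = (X₁, X₂)` is `d`-small with defining intervals
`I₁ = [a₁,b₁]` and `I₂ = [a₂,b₂]`. -/
structure IsDSmallWith (d : ℤ) (X₁ X₂ : Set ℤ) (a₁ b₁ a₂ b₂ : ℤ) : Prop where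
  len₁ : b₁ - a₁ = d / 2 - 1
  len₂ : b₂ - a₂ = d / 2 - 1
  bot₁ : a₁ ≤ botB X₁
  bot₂ : a₂ ≤ botB X₂
  top₁ : topB X₁ ≤ b₁
  top₂ : topB X₂ ≤ b₂
  cong : d ∣ b₂ - (b₁ + d / 2)

/-- The symbol `Θ = (X₁, X₂)` is `d`-small: it admits some pair of defining intervals. -/
def IsDSmall (d : ℤ) (X₁ X₂ : Set ℤ) : Prop :=
  ∃ a₁ b₁ a₂ b₂ : ℤ, IsDSmallWith d X₁ X₂ a₁ b₁ a₂ b₂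

/-- The row (`1` or `2`) containing the right region. -/
def rightRow (b₁ b₂ : ℤ) : ℕ := if b₁ < b₂ then 2 else 1

/-- The row, as a β-set, containing the right region. -/
def rightSet (X₁ X₂ : Set ℤ) (b₁ b₂ : ℤ) : Set ℤ := if b₁ < b₂ then X₂ else X₁

/-- The row, as a β-set, containing the left region. -/
def leftSet (X₁ X₂ : Set ℤ) (b₁ b₂ : ℤ) : Set ℤ := if b₁ < b₂ then X₁ else X₂

/-- The cardinality `kd` of the middle region. -/
def middleLen (d b₁ b₂ : ℤ) : ℤ := |b₂ - b₁| - d / 2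

/-- The alphabet `{∧, ∨, ×, ∘}` of up-down diagrams: `up = ∧`, `dn = ∨`,
`cross = ×`, `circ = ∘`. -/
inductive UD : Type
  | up
  | dn
  | cross
  | circ
deriving DecidableEq

/-- The up-down diagram `w_ud(Θ)` of a `d`-small symbol with defining intervals:
`wud d X₁ X₂ b₁ b₂ i` is the letter `w_i` for `1 ≤ i ≤ d/2`.  Here the right
region is `[m+1, m+d/2]` with `m = max b₁ b₂ - d/2`, `β_i = m + i`, and
`β_i - kd - d/2 = β_i - |b₂ - b₁|`. -/
noncomputable def wud (d : ℤ) (X₁ X₂ : Set ℤ) (b₁ b₂ : ℤ) (i : ℤ) : UD :=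
  if (max b₁ b₂ - d / 2 + i) ∈ rightSet X₁ X₂ b₁ b₂ then
    if (max b₁ b₂ - d / 2 + i) - |b₂ - b₁| ∈ leftSet X₁ X₂ b₁ b₂ then UD.cross else UD.up
  else
    if (max b₁ b₂ - d / 2 + i) - |b₂ - b₁| ∈ leftSet X₁ X₂ b₁ b₂ then UD.dn else UD.circ

/-- Removing an `e`-cohook in row `1` (the rows get interchanged afterwards). -/
def RemoveCohookRow1 (e : ℤ) (Θ Θ' : Set ℤ × Set ℤ) : Prop :=
  ∃ x : ℤ, x ∈ Θ.1 ∧ x - e ∉ Θ.2 ∧ Θ' = (Θ.2 ∪ {x - e}, Θ.1 \ {x})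

/-- Removing an `e`-cohook in row `2` (the rows get interchanged afterwards). -/
def RemoveCohookRow2 (e : ℤ) (Θ Θ' : Set ℤ × Set ℤ) : Prop :=
  ∃ x : ℤ, x ∈ Θ.2 ∧ x - e ∉ Θ.1 ∧ Θ' = (Θ.2 \ {x}, Θ.1 ∪ {x - e})

/-- Removing an `e`-cohook. -/
def RemoveCohook (e : ℤ) (Θ Θ' : Set ℤ × Set ℤ) : Prop :=
  RemoveCohookRow1 e Θ Θ' ∨ RemoveCohookRow2 e Θ Θ'

/-- The symbol `Θ` has an `e`-cohook. -/
def HasCohook (e : ℤ) (Θ : Set ℤ × Set ℤ) : Prop :=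
  (∃ x : ℤ, x ∈ Θ.1 ∧ x - e ∉ Θ.2) ∨ (∃ x : ℤ, x ∈ Θ.2 ∧ x - e ∉ Θ.1)

/-- `C` is an `e`-cocore of `Θ`: a symbol with no `e`-cohooks obtained from `Θ`
by a finite sequence of `e`-cohook removals. -/
def IsCocoreOf (e : ℤ) (Θ C : Set ℤ × Set ℤ) : Prop :=
  Relation.ReflTransGen (RemoveCohook e) Θ C ∧ ¬ HasCohook e C

/-- The `n`-fold composition of a relation. -/
def RelPow {α : Type*} (R : α → α → Prop) : ℕ → α → α → Prop
  | 0 => Eq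
  | n + 1 => fun a c => ∃ b, R a b ∧ RelPow R n b c

/-- `(a, b)` (row `a`, column `b`, both `1`-indexed) is a box of the partition `μ`
(`μ` is `0`-indexed, so `μ (a-1)` is the `a`-th part `λ_a`). -/
def IsBox (μ : ℕ → ℕ) (a b : ℕ) : Prop := 1 ≤ a ∧ 1 ≤ b ∧ b ≤ μ (a - 1)

/-- `(a, b)` is an addable box of `μ`: adjoining it yields a partition. -/
def IsAddableBox (μ : ℕ → ℕ) (a b : ℕ) : Prop :=
  1 ≤ a ∧ b = μ (a - 1) + 1 ∧ (a = 1 ∨ b ≤ μ (a - 2))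

/-- `(a, b)` is a removable box of `μ`: deleting it yields a partition. -/
def IsRemovableBox (μ : ℕ → ℕ) (a b : ℕ) : Prop :=
  1 ≤ a ∧ b = μ (a - 1) ∧ 1 ≤ b ∧ μ a < b

/-- The charged content `t + b - a` of the box in row `a` and column `b`,
with respect to the charge `t`. -/
def chCont (t : ℤ) (a b : ℕ) : ℤ := t + (b : ℤ) - (a : ℤ)

/-- Selecting the component `j ∈ {1, 2}` of a bipartition. -/
def compPart (μ₁ μ₂ : ℕ → ℕ) (j : ℕ) : ℕ → ℕ := if j = 1 then μ₁ else μ₂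

/-- Selecting the component `j ∈ {1, 2}` of a pair of charges. -/
def compT (t₁ t₂ : ℤ) (j : ℕ) : ℤ := if j = 1 then t₁ else t₂

/-- The box `(a, b)` in component `j` is a good removable `i`-box of the
bipartition `(μ₁, μ₂)` with charges `(t₁, t₂)`, where `r` is the row containing
the right region: it is a removable box of charged content `≡ i (mod d)` and
there is no addable box `A` of either component with charged content `≡ i (mod d)`
such that either `A` has strictly larger charged content, or `A` has equal
charged content and lies in component `r`. -/
def IsGoodRemovableBox (d : ℤ) (μ₁ μ₂ : ℕ → ℕ) (t₁ t₂ : ℤ) (r : ℕ) (i : ℤ)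
    (j a b : ℕ) : Prop :=
  (j = 1 ∨ j = 2) ∧ IsRemovableBox (compPart μ₁ μ₂ j) a b ∧
    d ∣ chCont (compT t₁ t₂ j) a b - i ∧
    ∀ j' a' b' : ℕ, (j' = 1 ∨ j' = 2) → IsAddableBox (compPart μ₁ μ₂ j') a' b' →
      d ∣ chCont (compT t₁ t₂ j') a' b' - i →
      ¬ (chCont (compT t₁ t₂ j) a b < chCont (compT t₁ t₂ j') a' b' ∨
        (chCont (compT t₁ t₂ j') a' b' = chCont (compT t₁ t₂ j) a b ∧ j' = r))

/-- The position of a letter in the order `× < ∧ < ∨ < ∘`. -/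
def udIdx : UD → ℕ
  | UD.cross => 0
  | UD.up => 1
  | UD.dn => 2
  | UD.circ => 3

/-- The word `w₁ ⋯ w_{d/2}` reads `×^α ∧^w ∨^h ∘^β`: all `×`'s first, then all
`∧`'s, then all `∨`'s, then all `∘`'s. -/
def SortedUD (d : ℤ) (w : ℤ → UD) : Prop :=
  ∀ i j : ℤ, 1 ≤ i → i ≤ j → j ≤ d / 2 → udIdx (w i) ≤ udIdx (w j)

/-- The number of occurrences of the letter `u` in the word `w₁ ⋯ w_{d/2}`. -/
noncomputable def countUD (d : ℤ) (w : ℤ → UD) (u : UD) : ℕ :=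
  ((Finset.Icc (1 : ℤ) (d / 2)).filter fun i => w i = u).card

/-- `w'` is obtained from `w` by permuting the letters `∧` and `∨` among the
positions carrying `∧` or `∨`, leaving every `×` and `∘` in place. -/
def PermUpDn (d : ℤ) (w w' : ℤ → UD) : Prop :=
  (∀ i : ℤ, 1 ≤ i → i ≤ d / 2 →
    ((w' i = UD.cross ↔ w i = UD.cross) ∧ (w' i = UD.circ ↔ w i = UD.circ))) ∧
  countUD d w' UD.up = countUD d w UD.up

/-- Replace every letter `∧` by `∨`, leaving the other letters unchanged. -/
def replaceUp : UD → UD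
  | UD.up => UD.dn
  | u => u

section Aux

variable {X : Set ℤ}

lemma beta_nonempty (hX : IsBetaSet X) : X.Nonempty := by
  obtain ⟨⟨c, hc⟩, _⟩ := hX
  exact ⟨c - 1, hc _ (by omega)⟩

lemma beta_bddAbove (hX : IsBetaSet X) : BddAbove X := by
  obtain ⟨_, ⟨C, hC⟩⟩ := hX
  exact ⟨C, fun x hx => by by_contra h; exact hC x (by omega) hx⟩

lemma topB_mem (hX : IsBetaSet X) : topB X ∈ X :=
  Int.csSup_mem (beta_nonempty hX) (beta_bddAbove hX)

lemma le_topB (hX : IsBetaSet X) {x : ℤ} (hx : x ∈ X) : x ≤ topB X :=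
  le_csSup (beta_bddAbove hX) hx

lemma botB_lt_mem (hX : IsBetaSet X) {w : ℤ} (hw : w < botB X) : w ∈ X := by
  obtain ⟨⟨c, hc⟩, ⟨C, hC⟩⟩ := hX
  have hne : ({z : ℤ | ∀ w : ℤ, w < z → w ∈ X}).Nonempty := ⟨c, fun w hw => hc w hw⟩
  have hbdd : BddAbove ({z : ℤ | ∀ w : ℤ, w < z → w ∈ X}) := by
    refine ⟨C + 1, fun z hz => ?_⟩
    by_contra h
    exact hC C le_rfl (hz C (by omega))
  exact Int.csSup_mem hne hbdd w hw

lemma lower_inter_nonempty (hX : IsBetaSet X) (t : ℤ) : (X ∩ Set.Iio t).Nonempty := by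
  obtain ⟨⟨c, hc⟩, _⟩ := hX
  exact ⟨min c t - 1, hc _ (by omega), by simp [Set.mem_Iio]⟩

lemma elemSeq_succ_mem (hX : IsBetaSet X) (n : ℕ) :
    elemSeq X (n + 1) ∈ X ∩ Set.Iio (elemSeq X n) := by
  have : elemSeq X (n + 1) = sSup (X ∩ Set.Iio (elemSeq X n)) := rfl
  rw [this]
  exact Int.csSup_mem (lower_inter_nonempty hX _)
    ((beta_bddAbove hX).mono Set.inter_subset_left)

lemma elemSeq_mem (hX : IsBetaSet X) (n : ℕ) : elemSeq X n ∈ X := by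
  cases n with
  | zero => exact topB_mem hX
  | succ n => exact (elemSeq_succ_mem hX n).1

lemma elemSeq_succ_lt (hX : IsBetaSet X) (n : ℕ) : elemSeq X (n + 1) < elemSeq X n :=
  (elemSeq_succ_mem hX n).2

lemma elemSeq_max (hX : IsBetaSet X) (n : ℕ) {y : ℤ} (hy : y ∈ X)
    (h : y < elemSeq X n) : y ≤ elemSeq X (n + 1) :=
  le_csSup ((beta_bddAbove hX).mono Set.inter_subset_left) ⟨hy, h⟩

lemma elemSeq_strictAnti (hX : IsBetaSet X) : StrictAnti (elemSeq X) :=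
  strictAnti_nat_of_succ_lt (elemSeq_succ_lt hX)

lemma gap_not_mem (hX : IsBetaSet X) (n : ℕ) {z : ℤ}
    (h1 : elemSeq X (n + 1) < z) (h2 : z < elemSeq X n) : z ∉ X :=
  fun hz => absurd (elemSeq_max hX n hz h2) (not_le.2 h1)

lemma top_not_mem (hX : IsBetaSet X) {z : ℤ} (h : topB X < z) : z ∉ X :=
  fun hz => absurd (le_topB hX hz) (not_le.2 h)

lemma mem_ge_eq (hX : IsBetaSet X) (j : ℕ) {y : ℤ} (hy : y ∈ X)
    (h : elemSeq X j ≤ y) : ∃ i ≤ j, y = elemSeq X i := by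
  induction j with
  | zero => exact ⟨0, le_rfl, le_antisymm (le_topB hX hy) h⟩
  | succ j ih =>
    rcases le_or_gt (elemSeq X j) y with h' | h'
    · obtain ⟨i, hi, hey⟩ := ih h'
      exact ⟨i, Nat.le_succ_of_le hi, hey⟩
    · exact ⟨j + 1, le_rfl, le_antisymm (le_of_not_gt (fun hc => absurd (elemSeq_max hX j hy h') (not_le.2 hc))) h |>.symm ▸ rfl⟩

lemma inter_Ici_eq (hX : IsBetaSet X) (j : ℕ) :
    X ∩ Set.Ici (elemSeq X j) = elemSeq X '' Set.Iic j := by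
  ext y
  constructor
  · rintro ⟨hy, hge⟩
    obtain ⟨i, hi, rfl⟩ := mem_ge_eq hX j hy hge
    exact ⟨i, hi, rfl⟩
  · rintro ⟨i, hi, rfl⟩
    exact ⟨elemSeq_mem hX i, (elemSeq_strictAnti hX).antitone hi⟩

lemma inter_Ici_finite (hX : IsBetaSet X) (z : ℤ) : (X ∩ Set.Ici z).Finite :=
  (Set.finite_Icc z (topB X)).subset (fun y hy => ⟨hy.2, le_topB hX hy.1⟩)

lemma ncard_inter_Ici (hX : IsBetaSet X) (j : ℕ) :
    (X ∩ Set.Ici (elemSeq X j)).ncard = j + 1 := by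
  rw [inter_Ici_eq hX j,
    Set.ncard_image_of_injective _ (elemSeq_strictAnti hX).injective]
  rw [← Finset.coe_Iic, Set.ncard_coe_finset, Nat.card_Iic]

lemma charge_le (hX : IsBetaSet X) (j : ℕ) : chargeB X ≤ elemSeq X j + j := by
  have hfin := inter_Ici_finite hX
  have hcount := ncard_inter_Ici hX j
  rcases le_or_gt (botB X) (elemSeq X j) with h | h
  · have hsub : X ∩ Set.Ici (botB X) ⊆
        (X ∩ Set.Ici (elemSeq X j)) ∪ Set.Ico (botB X) (elemSeq X j) := by
      rintro y ⟨hy, hge⟩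
      rcases le_or_gt (elemSeq X j) y with h' | h'
      · exact Or.inl ⟨hy, h'⟩
      · exact Or.inr ⟨hge, h'⟩
    have hle : (X ∩ Set.Ici (botB X)).ncard ≤
        (X ∩ Set.Ici (elemSeq X j)).ncard + (Set.Ico (botB X) (elemSeq X j)).ncard := by
      refine le_trans (Set.ncard_le_ncard hsub ((hfin _).union (Set.finite_Ico _ _)))
        (Set.ncard_union_le _ _)
    have hIco : (Set.Ico (botB X) (elemSeq X j)).ncard = (elemSeq X j - botB X).toNat := by
      rw [← Finset.coe_Ico, Set.ncard_coe_finset, Int.card_Ico]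
    rw [hcount, hIco] at hle
    unfold chargeB
    omega
  · have hsub : (X ∩ Set.Ici (botB X)) ∪ Set.Ico (elemSeq X j) (botB X) ⊆
        X ∩ Set.Ici (elemSeq X j) := by
      rintro y (⟨hy, hge⟩ | ⟨h1, h2⟩)
      · exact ⟨hy, le_trans (le_of_lt h) hge⟩
      · exact ⟨botB_lt_mem hX h2, h1⟩
    have hdisj : Disjoint (X ∩ Set.Ici (botB X)) (Set.Ico (elemSeq X j) (botB X)) := by
      rw [Set.disjoint_left]
      rintro y ⟨_, hge⟩ ⟨_, hlt⟩
      exact absurd hge (not_le.2 hlt)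
    have hle : (X ∩ Set.Ici (botB X)).ncard + (Set.Ico (elemSeq X j) (botB X)).ncard ≤
        (X ∩ Set.Ici (elemSeq X j)).ncard := by
      rw [← Set.ncard_union_eq hdisj (hfin _) (Set.finite_Ico _ _)]
      exact Set.ncard_le_ncard hsub (hfin _)
    have hIco : (Set.Ico (elemSeq X j) (botB X)).ncard = (botB X - elemSeq X j).toNat := by
      rw [← Finset.coe_Ico, Set.ncard_coe_finset, Int.card_Ico]
    rw [hcount, hIco] at hle
    unfold chargeB
    omega

lemma partB_cast (hX : IsBetaSet X) (j : ℕ) :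
    (partB X j : ℤ) = elemSeq X j - chargeB X + j := by
  have := charge_le hX j
  unfold partB
  omega

end Aux

lemma box_bounds {X : Set ℤ} (hX : IsBetaSet X) (A B : ℕ)
    (h : IsAddableBox (partB X) A B ∨ IsRemovableBox (partB X) A B) :
    botB X - 1 ≤ chargeB X + B - A ∧ chargeB X + B - A ≤ topB X := by
  rcases h with ⟨hA1, hB, hAB⟩ | ⟨hA1, hB, hB1, hlt⟩
  · -- addable box
    obtain ⟨j, rfl⟩ : ∃ j, A = j + 1 := ⟨A - 1, by omega⟩
    have hpj := partB_cast hX j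
    have hjj : j + 1 - 1 = j := rfl
    rw [hjj] at hB
    have hcontent : chargeB X + (B : ℤ) - ((j : ℕ) + 1 : ℕ) = elemSeq X j := by
      have : (B : ℤ) = (partB X j : ℤ) + 1 := by exact_mod_cast congrArg Nat.cast hB
      push_cast
      omega
    have hnm : elemSeq X j + 1 ∉ X := by
      rcases hAB with h1 | h2
      · have hj0 : j = 0 := by omega
        subst hj0
        have : elemSeq X 0 = topB X := rfl
        exact top_not_mem hX (by omega)
      · have hjne : j ≠ 0 := by
          intro hj0; subst hj0; simp at h2; omega
        obtain ⟨k, rfl⟩ : ∃ k, j = k + 1 := ⟨j - 1, by omega⟩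
        have hk2 : k + 1 + 1 - 2 = k := by omega
        rw [hk2] at h2
        have hpk := partB_cast hX k
        have hpk1 := partB_cast hX (k + 1)
        have h2' : (partB X (k+1) : ℤ) + 1 ≤ (partB X k : ℤ) := by
          have : (B : ℤ) ≤ (partB X k : ℤ) := by exact_mod_cast h2
          omega
        have hxx : elemSeq X (k+1) + 2 ≤ elemSeq X k := by push_cast at hpk hpk1; omega
        exact gap_not_mem hX k (by omega) (by omega)
    constructor
    · rw [hcontent]
      by_contra hcon
      exact hnm (botB_lt_mem hX (by omega))
    · rw [hcontent]; exact le_topB hX (elemSeq_mem hX j)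
  · -- removable box
    obtain ⟨j, rfl⟩ : ∃ j, A = j + 1 := ⟨A - 1, by omega⟩
    have hpj := partB_cast hX j
    have hpj1 := partB_cast hX (j + 1)
    have hjj : j + 1 - 1 = j := rfl
    rw [hjj] at hB
    have hcontent : chargeB X + (B : ℤ) - ((j : ℕ) + 1 : ℕ) = elemSeq X j - 1 := by
      have : (B : ℤ) = (partB X j : ℤ) := by exact_mod_cast congrArg Nat.cast hB
      push_cast
      omega
    have hself : elemSeq X (j+1) - chargeB X + ((j:ℤ)+1) ≤ (partB X (j+1) : ℤ) := by
      unfold partB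
      push_cast
      exact le_trans (le_of_eq (by push_cast; ring)) (Int.self_le_toNat _)
    have hxx : elemSeq X (j+1) + 2 ≤ elemSeq X j := by
      have hlt' : (partB X (j+1) : ℤ) < (B : ℤ) := by exact_mod_cast hlt
      have hBv : (B : ℤ) = (partB X j : ℤ) := by exact_mod_cast congrArg Nat.cast hB
      push_cast at hpj hpj1 hself
      omega
    have hnm : elemSeq X j - 1 ∉ X := gap_not_mem hX j (by omega) (by omega)
    constructor
    · rw [hcontent]
      by_contra hcon
      exact hnm (botB_lt_mem hX (by omega))
    · rw [hcontent]
      have := le_topB hX (elemSeq_mem hX j)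
      omega


/-- For a `d`-small symbol whose right region lies in row `1`
(`b₂ < b₁`) and whose middle region has cardinality at least `d`, given
addable-or-removable boxes `(A₁,B₁)` of `λ¹` and `(A₂,B₂)` of `λ²` whose charged
contents (w.r.t. `t = (σ₁, σ₂ + d/2)`) are congruent modulo `d`, the charged content
of the former is at least `d` greater than that of the latter. -/
theorem stmt6 (d : ℤ) (hd : 2 ≤ d) (hdE : Even d)
    (X₁ X₂ : Set ℤ) (hX₁ : IsBetaSet X₁) (hX₂ : IsBetaSet X₂)
    (a₁ b₁ a₂ b₂ : ℤ) (hsm : IsDSmallWith d X₁ X₂ a₁ b₁ a₂ b₂)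
    (hrow : b₂ < b₁) (hmid : d ≤ middleLen d b₁ b₂)
    (A₁ B₁ A₂ B₂ : ℕ)
    (hbx₁ : IsAddableBox (partB X₁) A₁ B₁ ∨ IsRemovableBox (partB X₁) A₁ B₁)
    (hbx₂ : IsAddableBox (partB X₂) A₂ B₂ ∨ IsRemovableBox (partB X₂) A₂ B₂)
    (hcong : d ∣ chCont (chargeB X₁) A₁ B₁ - chCont (chargeB X₂ + d / 2) A₂ B₂) :
    chCont (chargeB X₂ + d / 2) A₂ B₂ + d ≤ chCont (chargeB X₁) A₁ B₁ := by
  obtain ⟨hlo₁, hhi₁⟩ := box_bounds hX₁ A₁ B₁ hbx₁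
  obtain ⟨hlo₂, hhi₂⟩ := box_bounds hX₂ A₂ B₂ hbx₂
  have hdvd : (2 : ℤ) ∣ d := hdE.two_dvd
  have habs : |b₂ - b₁| = b₁ - b₂ := by rw [abs_sub_comm]; exact abs_of_nonneg (by omega)
  unfold middleLen at hmid
  rw [habs] at hmid
  have hb1 := hsm.bot₁
  have hb2 := hsm.bot₂
  have ht1 := hsm.top₁
  have ht2 := hsm.top₂
  have hl1 := hsm.len₁
  have hl2 := hsm.len₂
  simp only [chCont] at hcong ⊢
  have hpos : 0 < chargeB X₁ + (B₁ : ℤ) - A₁ - (chargeB X₂ + d / 2 + B₂ - A₂) := by omega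
  have := Int.le_of_dvd hpos hcong
  omega
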